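/- arXiv:math/0211130 — 6 statements merged into one kernel-verified Lean document; each statement's English description precedes it below -/
import Mathlib

section
/- Let X be a geodesic metric space satisfying the CAT(0) comparison inequality. Let m ≥ 3, let v₁, …, v_m ∈ X be pairwise distinct points (indices taken mod m), and for each i = 1, …, m let γᵢ be a geodesic from vᵢ to vᵢ₊₁. For each i let φᵢ be the Alexandrov angle at vᵢ between the geodesic γᵢ (from vᵢ to vᵢ₊₁) and the reversal of γᵢ₋₁ (the geodesic t ↦ γᵢ₋₁(d(vᵢ₋₁,vᵢ) − t) from vᵢ to vᵢ₋₁). Then φ₁ + φ₂ + ⋯ + φ_m ≤ (m − 2)·π. -/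
/-- `γ` is a geodesic from `x` to `y`: it is parametrised by arc length on
`[0, dist x y]`, starting at `x` and ending at `y`. -/
def IsGeodesic {X : Type*} [MetricSpace X] (x y : X) (γ : ℝ → X) : Prop :=
  γ 0 = x ∧ γ (dist x y) = y ∧
    ∀ s ∈ Set.Icc (0 : ℝ) (dist x y), ∀ t ∈ Set.Icc (0 : ℝ) (dist x y),
      dist (γ s) (γ t) = |s - t|

/-- A geodesic metric space: every pair of points is joined by a geodesic. -/
def IsGeodesicSpace (X : Type*) [MetricSpace X] : Prop :=
  ∀ x y : X, ∃ γ : ℝ → X, IsGeodesic x y γ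

/-- The comparison angle `∠̄ₓ(p,q)`: the angle at the vertex corresponding to `x`
of a Euclidean triangle with the same side lengths as the triple `x, p, q`. -/
noncomputable def compAngle {X : Type*} [MetricSpace X] (x p q : X) : ℝ :=
  Real.arccos
    ((dist x p ^ 2 + dist x q ^ 2 - dist p q ^ 2) / (2 * dist x p * dist x q))

/-- The CAT(0) comparison inequality. -/
def SatisfiesCAT0 (X : Type*) [MetricSpace X] : Prop :=
  ∀ (x y z : X) (γ₁ γ₂ : ℝ → X), IsGeodesic x y γ₁ → IsGeodesic x z γ₂ →
    ∀ s ∈ Set.Icc (0 : ℝ) (dist x y), ∀ t ∈ Set.Icc (0 : ℝ) (dist x z),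
      dist (γ₁ s) (γ₂ t) ≤
        Real.sqrt (s ^ 2 + t ^ 2 - 2 * s * t * Real.cos (compAngle x y z))

/-- The Alexandrov angle at `x` between a geodesic `γ` from `x` to `y` and a
geodesic `γ'` from `x` to `z`. -/
noncomputable def alexAngle {X : Type*} [MetricSpace X] (x y z : X)
    (γ γ' : ℝ → X) : ℝ :=
  ⨅ ε : {e : ℝ // 0 < e},
    sSup {θ : ℝ | ∃ s t : ℝ, 0 < s ∧ s < ε.1 ∧ 0 < t ∧ t < ε.1 ∧
      s ≤ dist x y ∧ t ≤ dist x z ∧ θ = compAngle x (γ s) (γ' t)}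

/-!
In a CAT(0) space the comparison angle `compAngle x (γ s) (γ' t)` is monotone in `s` and `t`, so
the Alexandrov angle is bounded by every comparison angle along the two geodesics; in particular
the three Alexandrov angles of a geodesic triangle sum to at most `π`. Alexandrov angles also
satisfy the triangle inequality, checked against a planar isosceles triangle whose base is split by
a ray from the apex. Cutting the polygon along the diagonal from `v (m - 2)` to `v 0` into a
triangle and a polygon with one vertex fewer, and applying the triangle inequality at both ends of
the diagonal, the bound `(m - 2) π` follows by induction on `m`.
-/

open Real Set

-- Law of cosines: the side opposite the angle `θ` of a Euclidean triangle with adjacent sides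
-- `a` and `b`.
noncomputable def euclidSide (a b θ : ℝ) : ℝ := √(a ^ 2 + b ^ 2 - 2 * a * b * cos θ)

lemma strictMonoOn_euclidSide {a b : ℝ} (ha : 0 < a) (hb : 0 < b) :
    StrictMonoOn (euclidSide a b) (Icc 0 π) := by
  intro θ hθ θ' hθ' h
  have hcos := cos_lt_cos_of_nonneg_of_le_pi hθ.1 hθ'.2 h
  refine sqrt_lt_sqrt ?_ (by nlinarith [mul_pos ha hb])
  nlinarith [cos_le_one θ, sq_nonneg (a - b), mul_pos ha hb]

lemma Complex.dist_polar (a b α β : ℝ) :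
    dist ((a : ℂ) * Complex.exp (α * Complex.I)) ((b : ℂ) * Complex.exp (β * Complex.I)) =
      euclidSide a b (β - α) := by
  rw [Complex.dist_eq_re_im, euclidSide, Real.cos_sub]
  congr 1
  simp only [Complex.re_ofReal_mul, Complex.im_ofReal_mul, Complex.exp_ofReal_mul_I_re,
    Complex.exp_ofReal_mul_I_im]
  linear_combination (a ^ 2) * Real.sin_sq_add_cos_sq α + (b ^ 2) * Real.sin_sq_add_cos_sq β

-- The ray at angle `φ₁` from the apex of the isosceles triangle with legs `δ` and apex angle
-- `φ₁ + φ₂` meets the base at distance `w` from the apex, splitting the base in two.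
lemma exists_euclidSide_add_euclidSide_eq {δ φ₁ φ₂ : ℝ} (hδ : 0 < δ) (hφ₁ : 0 < φ₁)
    (hφ₂ : 0 < φ₂) (hφ : φ₁ + φ₂ < π) :
    ∃ w, 0 < w ∧ w ≤ δ ∧ euclidSide δ w φ₁ + euclidSide w δ φ₂ = euclidSide δ δ (φ₁ + φ₂) := by
  have hs₁ : 0 < sin φ₁ := sin_pos_of_pos_of_lt_pi hφ₁ (by linarith)
  have hs₂ : 0 < sin φ₂ := sin_pos_of_pos_of_lt_pi hφ₂ (by linarith)
  have hs : 0 < sin (φ₁ + φ₂) := sin_pos_of_pos_of_lt_pi (by linarith) hφ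
  have hsin₂ : sin (φ₁ + φ₂) * cos φ₁ - cos (φ₁ + φ₂) * sin φ₁ = sin φ₂ := by
    rw [← Real.sin_sub, add_sub_cancel_left]
  set w := δ * sin (φ₁ + φ₂) / (sin φ₁ + sin φ₂)
  set t := sin φ₁ / (sin φ₁ + sin φ₂)
  refine ⟨w, by positivity, ?_, ?_⟩
  · rw [div_le_iff₀ (by positivity), Real.sin_add]
    nlinarith [mul_nonneg hs₁.le (sub_nonneg.2 (cos_le_one φ₂)),
      mul_nonneg hs₂.le (sub_nonneg.2 (cos_le_one φ₁))]
  have hQ : (w : ℂ) * Complex.exp (φ₁ * Complex.I) ∈ segment ℝ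
      ((δ : ℂ) * Complex.exp ((0 : ℝ) * Complex.I))
      ((δ : ℂ) * Complex.exp ((φ₁ + φ₂ : ℝ) * Complex.I)) := by
    refine ⟨1 - t, t, ?_, by positivity, by ring, ?_⟩
    · rw [sub_nonneg, div_le_one (by positivity)]
      linarith
    apply Complex.ext <;>
      simp only [Complex.add_re, Complex.add_im, Complex.real_smul, Complex.re_ofReal_mul,
        Complex.im_ofReal_mul, Complex.exp_ofReal_mul_I_re, Complex.exp_ofReal_mul_I_im,
        Real.cos_zero, Real.sin_zero]
    · simp only [w, t]
      field_simp
      linear_combination -hsin₂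
    · simp only [w, t]
      field_simp
      ring
  have h := dist_add_dist_of_mem_segment hQ
  rwa [Complex.dist_polar, Complex.dist_polar, Complex.dist_polar, sub_zero, sub_zero,
    add_sub_cancel_left] at h

lemma compAngle_eq_angle {V P : Type*} [NormedAddCommGroup V] [InnerProductSpace ℝ V]
    [MetricSpace P] [NormedAddTorsor V P] {p q r : P} (hq : p ≠ q) (hr : p ≠ r) :
    compAngle p q r = EuclideanGeometry.angle q p r := by
  have hpq := dist_pos.2 hq
  have hpr := dist_pos.2 hr
  have hcos : cos (EuclideanGeometry.angle q p r) =
      (dist p q ^ 2 + dist p r ^ 2 - dist q r ^ 2) / (2 * dist p q * dist p r) := by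
    have law := EuclideanGeometry.law_cos q p r
    rw [dist_comm q p, dist_comm r p] at law
    field_simp
    linarith
  rw [compAngle, ← hcos, arccos_cos (EuclideanGeometry.angle_nonneg _ _ _)
    (EuclideanGeometry.angle_le_pi _ _ _)]

section

variable {X : Type*} [MetricSpace X]

lemma compAngle_mem_Icc (x p q : X) : compAngle x p q ∈ Icc 0 π :=
  ⟨arccos_nonneg _, arccos_le_pi _⟩

lemma compAngle_congr {Y : Type*} [MetricSpace Y] {x p q : X} {x' p' q' : Y}
    (hp : dist x p = dist x' p') (hq : dist x q = dist x' q') (hpq : dist p q = dist p' q') :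
    compAngle x p q = compAngle x' p' q' := by
  rw [compAngle, compAngle, hp, hq, hpq]

lemma cos_compAngle {x p q : X} (hp : x ≠ p) (hq : x ≠ q) :
    cos (compAngle x p q) =
      (dist x p ^ 2 + dist x q ^ 2 - dist p q ^ 2) / (2 * dist x p * dist x q) := by
  have hxp := dist_pos.2 hp
  have hxq := dist_pos.2 hq
  have h₁ := dist_triangle p x q
  have h₂ := abs_le.1 (abs_dist_sub_le p q x)
  rw [dist_comm p x] at h₁ h₂
  rw [dist_comm q x] at h₂
  apply cos_arccos
  · rw [le_div_iff₀ (by positivity)]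
    nlinarith [dist_nonneg (x := p) (y := q)]
  · rw [div_le_one (by positivity)]
    nlinarith [dist_nonneg (x := p) (y := q)]

lemma dist_eq_euclidSide_compAngle {x p q : X} (hp : x ≠ p) (hq : x ≠ q) :
    dist p q = euclidSide (dist x p) (dist x q) (compAngle x p q) := by
  have hxp := dist_pos.2 hp
  have hxq := dist_pos.2 hq
  have law : dist x p ^ 2 + dist x q ^ 2 - 2 * dist x p * dist x q * cos (compAngle x p q) =
      dist p q ^ 2 := by
    rw [cos_compAngle hp hq]
    field_simp
    ring
  rw [euclidSide, law, sqrt_sq dist_nonneg]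

lemma compAngle_lt_iff {x p q : X} (hp : x ≠ p) (hq : x ≠ q) {θ : ℝ} (hθ : θ ∈ Icc 0 π) :
    compAngle x p q < θ ↔ dist p q < euclidSide (dist x p) (dist x q) θ := by
  rw [dist_eq_euclidSide_compAngle hp hq]
  exact ((strictMonoOn_euclidSide (dist_pos.2 hp) (dist_pos.2 hq)).lt_iff_lt
    (compAngle_mem_Icc x p q) hθ).symm

lemma compAngle_le_iff {x p q : X} (hp : x ≠ p) (hq : x ≠ q) {θ : ℝ} (hθ : θ ∈ Icc 0 π) :
    compAngle x p q ≤ θ ↔ dist p q ≤ euclidSide (dist x p) (dist x q) θ := by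
  rw [dist_eq_euclidSide_compAngle hp hq]
  exact ((strictMonoOn_euclidSide (dist_pos.2 hp) (dist_pos.2 hq)).le_iff_le
    (compAngle_mem_Icc x p q) hθ).symm

lemma exists_complex_triangle {x y z : X} (hy : x ≠ y) (hz : x ≠ z) :
    ∃ A B C : ℂ, dist A B = dist x y ∧ dist A C = dist x z ∧ dist B C = dist y z := by
  refine ⟨0, (dist x y : ℂ) * Complex.exp ((0 : ℝ) * Complex.I),
    (dist x z : ℂ) * Complex.exp (compAngle x y z * Complex.I), ?_, ?_, ?_⟩
  · simp
  · simp
  · rw [Complex.dist_polar, sub_zero, dist_eq_euclidSide_compAngle hy hz]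

theorem compAngle_add_compAngle_add_compAngle {x y z : X} (hxy : x ≠ y) (hyz : y ≠ z)
    (hzx : z ≠ x) : compAngle x y z + compAngle y z x + compAngle z x y = π := by
  obtain ⟨A, B, C, hAB, hAC, hBC⟩ := exists_complex_triangle hxy hzx.symm
  have hAB' : A ≠ B := dist_pos.1 (hAB ▸ dist_pos.2 hxy)
  have hBC' : B ≠ C := dist_pos.1 (hBC ▸ dist_pos.2 hyz)
  have hAC' : A ≠ C := dist_pos.1 (hAC ▸ dist_pos.2 hzx.symm)
  rw [compAngle_congr hAB.symm hAC.symm hBC.symm,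
    compAngle_congr (x' := B) (p' := C) (q' := A) hBC.symm (by rw [dist_comm B, hAB, dist_comm])
      (by rw [dist_comm C, hAC, dist_comm]),
    compAngle_congr (x' := C) (p' := A) (q' := B) (by rw [dist_comm C, hAC, dist_comm])
      (by rw [dist_comm C, hBC, dist_comm]) hAB.symm,
    compAngle_eq_angle hAB' hAC', compAngle_eq_angle hBC' hAB'.symm,
    compAngle_eq_angle hAC'.symm hBC'.symm]
  linarith [EuclideanGeometry.angle_add_angle_add_angle_eq_pi C hAB']

namespace IsGeodesic

variable {x y : X} {γ : ℝ → X}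

lemma dist_apply (h : IsGeodesic x y γ) {s : ℝ} (h₀ : 0 ≤ s) (h₁ : s ≤ dist x y) :
    dist x (γ s) = s := by
  rw [← h.1, h.2.2 0 ⟨le_rfl, dist_nonneg⟩ s ⟨h₀, h₁⟩, zero_sub, abs_neg, abs_of_nonneg h₀]

lemma ne_apply (h : IsGeodesic x y γ) {s : ℝ} (h₀ : 0 < s) (h₁ : s ≤ dist x y) : x ≠ γ s :=
  dist_pos.1 (by rwa [h.dist_apply h₀.le h₁])

lemma restrict (h : IsGeodesic x y γ) {s : ℝ} (h₀ : 0 ≤ s) (h₁ : s ≤ dist x y) :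
    IsGeodesic x (γ s) γ := by
  refine ⟨h.1, by rw [h.dist_apply h₀ h₁], fun a ha b hb => ?_⟩
  rw [h.dist_apply h₀ h₁] at ha hb
  exact h.2.2 a ⟨ha.1, ha.2.trans h₁⟩ b ⟨hb.1, hb.2.trans h₁⟩

lemma reverse (h : IsGeodesic x y γ) : IsGeodesic y x (fun t => γ (dist x y - t)) := by
  rw [IsGeodesic, dist_comm y x]
  refine ⟨by simpa using h.2.1, by simpa using h.1, fun a ha b hb => ?_⟩
  rw [h.2.2 _ ⟨by linarith [ha.2], by linarith [ha.1]⟩ _ ⟨by linarith [hb.2], by linarith [hb.1]⟩,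
    abs_sub_comm]
  ring_nf

end IsGeodesic

lemma SatisfiesCAT0.compAngle_mono (hCAT : SatisfiesCAT0 X) {x y z : X} {γ γ' : ℝ → X}
    (hγ : IsGeodesic x y γ) (hγ' : IsGeodesic x z γ') {s s₀ t t₀ : ℝ}
    (hs : 0 < s) (hss₀ : s ≤ s₀) (hs₀ : s₀ ≤ dist x y)
    (ht : 0 < t) (htt₀ : t ≤ t₀) (ht₀ : t₀ ≤ dist x z) :
    compAngle x (γ s) (γ' t) ≤ compAngle x (γ s₀) (γ' t₀) := by
  have hcat := hCAT x (γ s₀) (γ' t₀) γ γ' (hγ.restrict (hs.le.trans hss₀) hs₀)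
    (hγ'.restrict (ht.le.trans htt₀) ht₀) s
    ⟨hs.le, by rwa [hγ.dist_apply (hs.le.trans hss₀) hs₀]⟩ t
    ⟨ht.le, by rwa [hγ'.dist_apply (ht.le.trans htt₀) ht₀]⟩
  rw [compAngle_le_iff (hγ.ne_apply hs (hss₀.trans hs₀)) (hγ'.ne_apply ht (htt₀.trans ht₀))
    (compAngle_mem_Icc _ _ _), hγ.dist_apply hs.le (hss₀.trans hs₀),
    hγ'.dist_apply ht.le (htt₀.trans ht₀)]
  exact hcat

def angleWindow (x y z : X) (γ γ' : ℝ → X) (ε : ℝ) : Set ℝ :=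
  {θ | ∃ s t : ℝ, 0 < s ∧ s < ε ∧ 0 < t ∧ t < ε ∧
    s ≤ dist x y ∧ t ≤ dist x z ∧ θ = compAngle x (γ s) (γ' t)}

variable {x y z : X} {γ γ' : ℝ → X}

lemma angleWindow_subset_Icc (ε : ℝ) : angleWindow x y z γ γ' ε ⊆ Icc 0 π := by
  rintro θ ⟨s, t, -, -, -, -, -, -, rfl⟩
  exact compAngle_mem_Icc _ _ _

lemma sSup_angleWindow_nonneg (ε : ℝ) : 0 ≤ sSup (angleWindow x y z γ γ' ε) :=
  Real.sSup_nonneg fun _ hθ => (angleWindow_subset_Icc ε hθ).1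

lemma alexAngle_nonneg : 0 ≤ alexAngle x y z γ γ' :=
  Real.iInf_nonneg fun ε => sSup_angleWindow_nonneg ε.1

lemma alexAngle_le_sSup_angleWindow {ε : ℝ} (hε : 0 < ε) :
    alexAngle x y z γ γ' ≤ sSup (angleWindow x y z γ γ' ε) :=
  ciInf_le ⟨0, by rintro _ ⟨e, rfl⟩; exact sSup_angleWindow_nonneg e.1⟩ (⟨ε, hε⟩ : {e : ℝ // 0 < e})

lemma SatisfiesCAT0.alexAngle_le_compAngle (hCAT : SatisfiesCAT0 X)
    (hγ : IsGeodesic x y γ) (hγ' : IsGeodesic x z γ') {s t : ℝ}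
    (hs : 0 < s) (hsy : s ≤ dist x y) (ht : 0 < t) (htz : t ≤ dist x z) :
    alexAngle x y z γ γ' ≤ compAngle x (γ s) (γ' t) := by
  set ε := min s t
  have hε : 0 < ε := lt_min hs ht
  have hwindow : (angleWindow x y z γ γ' ε).Nonempty :=
    ⟨_, ε / 2, ε / 2, half_pos hε, half_lt_self hε, half_pos hε, half_lt_self hε,
      by linarith [min_le_left s t], by linarith [min_le_right s t], rfl⟩
  calc alexAngle x y z γ γ' ≤ sSup (angleWindow x y z γ γ' ε) := alexAngle_le_sSup_angleWindow hε
    _ ≤ compAngle x (γ s) (γ' t) := by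
        refine csSup_le hwindow ?_
        rintro _ ⟨s', t', hs', hs'ε, ht', ht'ε, -, -, rfl⟩
        exact hCAT.compAngle_mono hγ hγ' hs' (hs'ε.le.trans (min_le_left s t)) hsy
          ht' (ht'ε.le.trans (min_le_right s t)) htz

lemma SatisfiesCAT0.alexAngle_le_compAngle_self (hCAT : SatisfiesCAT0 X)
    (hγ : IsGeodesic x y γ) (hγ' : IsGeodesic x z γ') (hy : x ≠ y) (hz : x ≠ z) :
    alexAngle x y z γ γ' ≤ compAngle x y z := by
  simpa only [hγ.2.1, hγ'.2.1] using
    hCAT.alexAngle_le_compAngle hγ hγ' (dist_pos.2 hy) le_rfl (dist_pos.2 hz) le_rfl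

lemma exists_compAngle_lt_of_alexAngle_lt {φ : ℝ} (h : alexAngle x y z γ γ' < φ) :
    ∃ δ > 0, ∀ s t, 0 < s → s ≤ δ → 0 < t → t ≤ δ → s ≤ dist x y → t ≤ dist x z →
      compAngle x (γ s) (γ' t) < φ := by
  obtain ⟨⟨ε, hε⟩, hlt⟩ := exists_lt_of_ciInf_lt h
  refine ⟨ε / 2, half_pos hε, fun s t hs hsδ ht htδ hsy htz => lt_of_le_of_lt ?_ hlt⟩
  exact le_csSup ⟨π, fun θ hθ => (angleWindow_subset_Icc ε hθ).2⟩
    ⟨s, t, hs, by linarith, ht, by linarith, hsy, htz, rfl⟩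

lemma compAngle_lt_add_of_euclidSide_add_euclidSide_eq {x p q r : X} {δ w φ₁ φ₂ : ℝ}
    (hp : dist x p = δ) (hq : dist x q = w) (hr : dist x r = δ) (hδ : 0 < δ) (hw : 0 < w)
    (hφ₁ : 0 ≤ φ₁) (hφ₂ : 0 ≤ φ₂) (hφ : φ₁ + φ₂ ≤ π)
    (hsplit : euclidSide δ w φ₁ + euclidSide w δ φ₂ = euclidSide δ δ (φ₁ + φ₂))
    (h₁ : compAngle x p q < φ₁) (h₂ : compAngle x q r < φ₂) :
    compAngle x p r < φ₁ + φ₂ := by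
  have hxp : x ≠ p := dist_pos.1 (hp ▸ hδ)
  have hxq : x ≠ q := dist_pos.1 (hq ▸ hw)
  have hxr : x ≠ r := dist_pos.1 (hr ▸ hδ)
  have hpq := (compAngle_lt_iff hxp hxq ⟨hφ₁, by linarith⟩).1 h₁
  have hqr := (compAngle_lt_iff hxq hxr ⟨hφ₂, by linarith⟩).1 h₂
  rw [compAngle_lt_iff hxp hxr ⟨by linarith, hφ⟩]
  rw [hp, hq] at hpq
  rw [hq, hr] at hqr
  rw [hp, hr, ← hsplit]
  linarith [dist_triangle p q r]

theorem SatisfiesCAT0.alexAngle_le_add (hCAT : SatisfiesCAT0 X) {g₁ g₂ g₃ : ℝ → X}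
    (h₁ : IsGeodesic x y g₁) (h₂ : IsGeodesic x z g₂) {w : X} (h₃ : IsGeodesic x w g₃)
    (hy : x ≠ y) (hz : x ≠ z) (hw : x ≠ w) :
    alexAngle x y w g₁ g₃ ≤ alexAngle x y z g₁ g₂ + alexAngle x z w g₂ g₃ := by
  by_contra! hlt
  set α := alexAngle x y z g₁ g₂
  set β := alexAngle x z w g₂ g₃
  set κ := alexAngle x y w g₁ g₃
  obtain ⟨φ₁, φ₂, hα, hβ, hκ⟩ : ∃ φ₁ φ₂, α < φ₁ ∧ β < φ₂ ∧ φ₁ + φ₂ < κ :=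
    ⟨α + (κ - α - β) / 3, β + (κ - α - β) / 3, by linarith, by linarith, by linarith⟩
  have hφ₁ : 0 < φ₁ := alexAngle_nonneg.trans_lt hα
  have hφ₂ : 0 < φ₂ := alexAngle_nonneg.trans_lt hβ
  have hφ : φ₁ + φ₂ < π := hκ.trans_le ((hCAT.alexAngle_le_compAngle_self h₁ h₃ hy hw).trans
    (compAngle_mem_Icc x y w).2)
  obtain ⟨δ₁, hδ₁, H₁⟩ := exists_compAngle_lt_of_alexAngle_lt hα
  obtain ⟨δ₂, hδ₂, H₂⟩ := exists_compAngle_lt_of_alexAngle_lt hβ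
  set δ := min (min δ₁ δ₂) (min (dist x y) (min (dist x z) (dist x w)))
  have hδ : 0 < δ := lt_min (lt_min hδ₁ hδ₂)
    (lt_min (dist_pos.2 hy) (lt_min (dist_pos.2 hz) (dist_pos.2 hw)))
  have hδ₁' : δ ≤ δ₁ := (min_le_left _ _).trans (min_le_left _ _)
  have hδ₂' : δ ≤ δ₂ := (min_le_left _ _).trans (min_le_right _ _)
  have hδy : δ ≤ dist x y := (min_le_right _ _).trans (min_le_left _ _)
  have hδz : δ ≤ dist x z := (min_le_right _ _).trans ((min_le_right _ _).trans (min_le_left _ _))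
  have hδw : δ ≤ dist x w :=
    (min_le_right _ _).trans ((min_le_right _ _).trans (min_le_right _ _))
  obtain ⟨t, ht, htδ, hsplit⟩ := exists_euclidSide_add_euclidSide_eq hδ hφ₁ hφ₂ hφ
  have key := compAngle_lt_add_of_euclidSide_add_euclidSide_eq (h₁.dist_apply hδ.le hδy)
    (h₂.dist_apply ht.le (htδ.trans hδz)) (h₃.dist_apply hδ.le hδw) hδ ht hφ₁.le hφ₂.le hφ.le
    hsplit (H₁ δ t hδ hδ₁' ht (htδ.trans hδ₁') hδy (htδ.trans hδz))
    (H₂ t δ ht (htδ.trans hδ₂') hδ hδ₂' (htδ.trans hδz) hδw)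
  have := hCAT.alexAngle_le_compAngle h₁ h₃ hδ hδy hδ hδw
  linarith

theorem SatisfiesCAT0.alexAngle_add_add_le_pi (hCAT : SatisfiesCAT0 X)
    {γxy γxz γyz γyx γzx γzy : ℝ → X}
    (hγxy : IsGeodesic x y γxy) (hγxz : IsGeodesic x z γxz) (hγyz : IsGeodesic y z γyz)
    (hγyx : IsGeodesic y x γyx) (hγzx : IsGeodesic z x γzx) (hγzy : IsGeodesic z y γzy)
    (hxy : x ≠ y) (hyz : y ≠ z) (hzx : z ≠ x) :
    alexAngle x y z γxy γxz + alexAngle y z x γyz γyx + alexAngle z x y γzx γzy ≤ π := by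
  rw [← compAngle_add_compAngle_add_compAngle hxy hyz hzx]
  gcongr
  · exact hCAT.alexAngle_le_compAngle_self hγxy hγxz hxy hzx.symm
  · exact hCAT.alexAngle_le_compAngle_self hγyz hγyx hyz hxy.symm
  · exact hCAT.alexAngle_le_compAngle_self hγzx hγzy hzx hyz.symm

-- The interior angle at `x` of the broken geodesic `z → x → y`.
noncomputable def cornerAngle (z x y : X) (γin γout : ℝ → X) : ℝ :=
  alexAngle x y z γout (fun t => γin (dist z x - t))

theorem SatisfiesCAT0.cornerAngle_polygon_sum_le (hX : IsGeodesicSpace X)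
    (hCAT : SatisfiesCAT0 X) (n : ℕ) (w : ℕ → X) (hw : InjOn w (Iic (n + 2)))
    (e : ℕ → ℝ → X) (he : ∀ j ≤ n + 1, IsGeodesic (w j) (w (j + 1)) (e j))
    (c : ℝ → X) (hc : IsGeodesic (w (n + 2)) (w 0) c) :
    cornerAngle (w (n + 2)) (w 0) (w 1) c (e 0) +
      ∑ j ∈ Finset.range (n + 1), cornerAngle (w j) (w (j + 1)) (w (j + 2)) (e j) (e (j + 1)) +
      cornerAngle (w (n + 1)) (w (n + 2)) (w 0) (e (n + 1)) c ≤ (n + 1) * π := by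
  have hne : ∀ i j, i ≤ n + 2 ∧ j ≤ n + 2 ∧ i ≠ j → w i ≠ w j :=
    fun i j hij h => hij.2.2 (hw (mem_Iic.2 hij.1) (mem_Iic.2 hij.2.1) h)
  induction n generalizing c with
  | zero =>
    simpa [cornerAngle] using hCAT.alexAngle_add_add_le_pi (he 0 (by omega)) hc.reverse
      (he 1 le_rfl) (he 0 (by omega)).reverse hc (he 1 le_rfl).reverse
      (hne 0 1 (by omega)) (hne 1 2 (by omega)) (hne 2 0 (by omega))
  | succ n ih =>
    simp only [show n + 1 + 2 = n + 3 from rfl, show n + 1 + 1 = n + 2 from rfl] at *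
    obtain ⟨d, hd⟩ := hX (w (n + 2)) (w 0)
    have hsmall := ih (hw.mono (Iic_subset_Iic.2 (by omega))) (fun j hj => he j (by omega)) d hd
      (fun i j hij => hne i j (by omega))
    have htri := hCAT.alexAngle_add_add_le_pi (he (n + 2) le_rfl) hd hc
      (he (n + 2) le_rfl).reverse hd.reverse hc.reverse
      (hne (n + 2) (n + 3) (by omega)) (hne (n + 3) 0 (by omega)) (hne 0 (n + 2) (by omega))
    have hsplit₀ := hCAT.alexAngle_le_add (he 0 (by omega)) hd.reverse hc.reverse
      (hne 0 1 (by omega)) (hne 0 (n + 2) (by omega)) (hne 0 (n + 3) (by omega))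
    have hsplit₁ := hCAT.alexAngle_le_add (he (n + 2) le_rfl) hd (he (n + 1) (by omega)).reverse
      (hne (n + 2) (n + 3) (by omega)) (hne (n + 2) 0 (by omega)) (hne (n + 2) (n + 1) (by omega))
    rw [Finset.sum_range_succ]
    simp only [cornerAngle] at hsmall ⊢
    push_cast
    linarith

end

lemma ZMod.sum_eq_sum_range {M : Type*} [AddCommMonoid M] {n : ℕ} [NeZero n] (f : ZMod n → M) :
    ∑ i, f i = ∑ j ∈ Finset.range n, f j :=
  Finset.sum_nbij' ZMod.val Nat.cast (fun i _ => Finset.mem_range.2 (ZMod.val_lt i))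
    (fun _ _ => Finset.mem_univ _) (fun i _ => ZMod.natCast_zmod_val i)
    (fun _ hj => ZMod.val_cast_of_lt (Finset.mem_range.1 hj))
    (fun i _ => by rw [ZMod.natCast_zmod_val])

theorem stmt_0 {X : Type*} [MetricSpace X]
    (hX : IsGeodesicSpace X) (hCAT : SatisfiesCAT0 X)
    (m : ℕ) [NeZero m] (hm : 3 ≤ m)
    (v : ZMod m → X) (hv : Function.Injective v)
    (γ : ZMod m → ℝ → X)
    (hγ : ∀ i : ZMod m, IsGeodesic (v i) (v (i + 1)) (γ i)) :
    ∑ i : ZMod m,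
        alexAngle (v i) (v (i + 1)) (v (i - 1)) (γ i)
          (fun t => γ (i - 1) (dist (v (i - 1)) (v i) - t))
      ≤ ((m : ℝ) - 2) * Real.pi := by
  obtain ⟨n, rfl⟩ : ∃ n, m = n + 3 := ⟨m - 3, by omega⟩
  have hlast : ((n + 2 : ℕ) : ZMod (n + 3)) + 1 = 0 := by
    rw [← Nat.cast_succ]; exact ZMod.natCast_self (n + 3)
  have hinj : InjOn (fun j : ℕ => v j) (Iic (n + 2)) := hv.comp_injOn fun i hi j hj h => by
    simpa [ZMod.val_cast_of_lt (Nat.lt_succ_of_le (mem_Iic.1 hi)),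
      ZMod.val_cast_of_lt (Nat.lt_succ_of_le (mem_Iic.1 hj))] using congrArg ZMod.val h
  have hpoly := hCAT.cornerAngle_polygon_sum_le hX n (fun j => v j) hinj (fun j => γ j)
    (fun j _ => by simpa using hγ j) (γ (n + 2 : ℕ))
    (by simpa only [hlast, Nat.cast_zero] using hγ (n + 2 : ℕ))
  calc ∑ i : ZMod (n + 3), cornerAngle (v (i - 1)) (v i) (v (i + 1)) (γ (i - 1)) (γ i)
      = ∑ j ∈ Finset.range (n + 3),
          cornerAngle (v (j - 1)) (v j) (v (j + 1)) (γ (j - 1)) (γ j) := ZMod.sum_eq_sum_range _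
    _ = _ := by
        rw [Finset.sum_range_succ, Finset.sum_range_succ', add_comm _ (cornerAngle _ _ _ _ _)]
        have h₀ : ((0 : ℕ) : ZMod (n + 3)) - 1 = ((n + 2 : ℕ) : ZMod (n + 3)) := by
          rw [Nat.cast_zero, zero_sub, ← eq_neg_of_add_eq_zero_left hlast]
        have h₁ : ((n + 2 : ℕ) : ZMod (n + 3)) - 1 = ((n + 1 : ℕ) : ZMod (n + 3)) := by
          push_cast; ring
        simp only [h₀, h₁, hlast]
        push_cast
        ring_nf
    _ ≤ (n + 1) * π := hpoly
    _ = ((n + 3 : ℕ) - 2) * π := by push_cast; ring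
end

section
/- Let G be a finite connected simple graph on a vertex type V, with V nonempty. Then the kernel of the length homomorphism ℓ : A_G → ℤ is generated, as a subgroup of A_G, by the set { ū⁻¹·v̄ : u and v adjacent in G }. -/
/-!
Let `S` be the subgroup generated by the `ū⁻¹ v̄` with `u ~ v`. Chaining along paths, `S` contains
`ū⁻¹ v̄` and `ū v̄⁻¹` for all vertices `u, v`. If `u ~ v`, then `ū` commutes with `ū⁻¹ v̄`, so
conjugating `ū⁻¹ v̄` by `w̄` (resp. `w̄⁻¹`) is the same as conjugating it by `w̄ ū⁻¹` (resp. `w̄⁻¹ ū`),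
which lies in `S`; hence `S` is normal. All generators have the same image `q` in `A_G ⧸ S`, so the
quotient map is `g ↦ q ^ ℓ g`, which kills `ker ℓ`.
-/

/-- The relator set of the right-angled Artin group of a simple graph `G`:
commutators of pairs of adjacent vertices. -/
def raagRels {V : Type*} (G : SimpleGraph V) : Set (FreeGroup V) :=
  {r | ∃ u v : V, G.Adj u v ∧
    r = FreeGroup.of u * FreeGroup.of v * (FreeGroup.of u)⁻¹ * (FreeGroup.of v)⁻¹}

/-- The right-angled Artin group of a simple graph `G`. -/
abbrev RAAG {V : Type*} (G : SimpleGraph V) : Type _ :=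
  PresentedGroup (raagRels G)

/-- The image `v̄` of a vertex (generator) `v` in the right-angled Artin group. -/
def RAAG.gen {V : Type*} (G : SimpleGraph V) (v : V) : RAAG G :=
  PresentedGroup.of (rels := raagRels G) v

open Subgroup

theorem Subgroup.conj_mem_of_mul_mem {H : Type*} [Group H] {K : Subgroup H} {a b c : H}
    (hab : a * b ∈ K) (hc : c ∈ K) (hbc : Commute b c) : a * c * a⁻¹ ∈ K := by
  have : a * c * a⁻¹ = a * b * c * (a * b)⁻¹ := by
    simp [mul_assoc, hbc.eq]
  rw [this]
  exact K.mul_mem (K.mul_mem hab hc) (K.inv_mem hab)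

theorem MonoidHom.ker_le_of_inv_mul_mem {α H : Type*} [Group H] [Nonempty α] {f : α → H}
    (hf : closure (Set.range f) = ⊤) (ℓ : H →* Multiplicative ℤ)
    (hℓ : ∀ a, ℓ (f a) = Multiplicative.ofAdd 1) (N : Subgroup H) [N.Normal]
    (hN : ∀ a b, (f a)⁻¹ * f b ∈ N) : ℓ.ker ≤ N := by
  obtain ⟨a₀⟩ := ‹Nonempty α›
  have hquot : QuotientGroup.mk' N = (zpowersHom (H ⧸ N) (f a₀ : H ⧸ N)).comp ℓ := by
    refine MonoidHom.eq_of_eqOn_dense hf ?_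
    rintro _ ⟨a, rfl⟩
    simp [hℓ, QuotientGroup.eq, hN]
  intro g hg
  rw [← QuotientGroup.eq_one_iff, ← QuotientGroup.mk'_apply, hquot]
  simp [MonoidHom.mem_ker.mp hg]

namespace SimpleGraph

variable {α H : Type*} [Group H] (G : SimpleGraph α) (f : α → H)

def edgeRatioSubgroup : Subgroup H :=
  closure {x | ∃ u v, G.Adj u v ∧ x = (f u)⁻¹ * f v}

variable {G f}

theorem inv_mul_mem_edgeRatioSubgroup {u v : α} (h : G.Adj u v) :
    (f u)⁻¹ * f v ∈ G.edgeRatioSubgroup f :=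
  subset_closure ⟨u, v, h, rfl⟩

theorem Reachable.inv_mul_mem {K : Subgroup H}
    (hK : ∀ ⦃u v⦄, G.Adj u v → (f u)⁻¹ * f v ∈ K) {u v : α} (h : G.Reachable u v) :
    (f u)⁻¹ * f v ∈ K := by
  obtain ⟨p⟩ := h
  induction p with
  | nil => simp
  | @cons u w v huw _ ih =>
    simpa [mul_assoc] using K.mul_mem (hK huw) ih

theorem conj_mem_edgeRatioSubgroup (hcomm : ∀ ⦃u v⦄, G.Adj u v → Commute (f u) (f v)) {a : H}
    (ha : ∀ u, a * f u ∈ G.edgeRatioSubgroup f ∨ a * (f u)⁻¹ ∈ G.edgeRatioSubgroup f)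
    {x : H} (hx : x ∈ G.edgeRatioSubgroup f) : a * x * a⁻¹ ∈ G.edgeRatioSubgroup f := by
  suffices G.edgeRatioSubgroup f ≤ (G.edgeRatioSubgroup f).comap (MulAut.conj a).toMonoidHom from
    this hx
  refine closure_le _ |>.mpr ?_
  rintro _ ⟨u, v, huv, rfl⟩
  have hc : Commute (f u) ((f u)⁻¹ * f v) :=
    (Commute.refl _).inv_right.mul_right (hcomm huv)
  rcases ha u with hau | hau
  · exact conj_mem_of_mul_mem hau (inv_mul_mem_edgeRatioSubgroup huv) hc
  · exact conj_mem_of_mul_mem hau (inv_mul_mem_edgeRatioSubgroup huv) hc.inv_left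

theorem mem_normalizer_edgeRatioSubgroup (hG : G.Preconnected)
    (hcomm : ∀ ⦃u v⦄, G.Adj u v → Commute (f u) (f v)) (w : α) :
    f w ∈ normalizer (G.edgeRatioSubgroup f : Set H) := by
  have hadj : ∀ ⦃u v⦄, G.Adj u v → (f u)⁻¹ * f v ∈ G.edgeRatioSubgroup f :=
    fun _ _ ↦ inv_mul_mem_edgeRatioSubgroup
  have hadj' : ∀ ⦃u v⦄, G.Adj u v → f u * (f v)⁻¹ ∈ G.edgeRatioSubgroup f := fun u v huv ↦ by
    simpa [((hcomm huv).inv_right).eq] using hadj huv.symm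
  refine mem_normalizer_iff.mpr fun x ↦ ⟨fun hx ↦ ?_, fun hx ↦ ?_⟩
  · refine conj_mem_edgeRatioSubgroup hcomm (fun u ↦ .inr ?_) hx
    simpa using (hG w u).inv_mul_mem (f := fun v ↦ (f v)⁻¹) (by simpa using hadj')
  · have := conj_mem_edgeRatioSubgroup hcomm (a := (f w)⁻¹)
      (fun u ↦ .inl ((hG w u).inv_mul_mem hadj)) hx
    simpa [mul_assoc] using this

theorem edgeRatioSubgroup_normal (hf : closure (Set.range f) = ⊤) (hG : G.Preconnected)
    (hcomm : ∀ ⦃u v⦄, G.Adj u v → Commute (f u) (f v)) : (G.edgeRatioSubgroup f).Normal := by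
  rw [← normalizer_eq_top_iff, eq_top_iff, ← hf, closure_le]
  rintro _ ⟨w, rfl⟩
  exact mem_normalizer_edgeRatioSubgroup hG hcomm w

end SimpleGraph

theorem RAAG.gen_commute {V : Type*} (G : SimpleGraph V) {u v : V} (h : G.Adj u v) :
    Commute (RAAG.gen G u) (RAAG.gen G v) := by
  have := PresentedGroup.mk_eq_mk_of_mul_inv_mem (rels := raagRels G)
    (x := FreeGroup.of u * FreeGroup.of v) (y := FreeGroup.of v * FreeGroup.of u)
    ⟨u, v, h, by group⟩
  rwa [map_mul, map_mul] at this

theorem stmt_3_general {V : Type*} (G : SimpleGraph V)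
    (hconn : G.Connected)
    (ℓ : RAAG G →* Multiplicative ℤ)
    (hℓ : ∀ v : V, ℓ (RAAG.gen G v) = Multiplicative.ofAdd 1) :
    ℓ.ker = Subgroup.closure
      {x : RAAG G | ∃ u v : V, G.Adj u v ∧ x = (RAAG.gen G u)⁻¹ * RAAG.gen G v} := by
  change ℓ.ker = G.edgeRatioSubgroup (RAAG.gen G)
  have hgen : closure (Set.range (RAAG.gen G)) = ⊤ := PresentedGroup.closure_range_of _
  have hnormal := G.edgeRatioSubgroup_normal hgen hconn.preconnected fun _ _ ↦ RAAG.gen_commute G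
  have hne := hconn.nonempty
  refine le_antisymm (ℓ.ker_le_of_inv_mul_mem hgen hℓ _ fun u v ↦ ?_) (closure_le _ |>.mpr ?_)
  · exact (hconn u v).inv_mul_mem fun _ _ ↦ SimpleGraph.inv_mul_mem_edgeRatioSubgroup
  · rintro _ ⟨u, v, -, rfl⟩
    simp [hℓ]

theorem stmt_3 {V : Type*} [Finite V] [Nonempty V] (G : SimpleGraph V)
    (hconn : G.Connected)
    (ℓ : RAAG G →* Multiplicative ℤ)
    (hℓ : ∀ v : V, ℓ (RAAG.gen G v) = Multiplicative.ofAdd 1) :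
    ℓ.ker = Subgroup.closure
      {x : RAAG G | ∃ u v : V, G.Adj u v ∧ x = (RAAG.gen G u)⁻¹ * RAAG.gen G v} :=
  stmt_3_general G hconn ℓ hℓ
end

section
/- Let G be a simple graph on a vertex type V and let S ⊆ V. Let G[S] denote the induced subgraph of G on S (in Lean: G.induce S). Then the group homomorphism A_{G[S]} → A_G determined by sending the generator corresponding to s ∈ S to s̄ (which is well defined since adjacency in G[S] implies adjacency in G, so relators map to relators) is injective. -/
/-
A homomorphism out of `A_G` is just a map on vertices sending adjacent vertices to
commuting elements. Sending `v ∈ S` to its generator in `A_{G[S]}` and every other vertex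
to `1` is such a map, since two adjacent vertices of `S` are adjacent in `G[S]`. The
resulting retraction `A_G → A_{G[S]}` is a left inverse of `ψ`, so `ψ` is injective.
-/

namespace RAAG

variable {V : Type*} {G : SimpleGraph V}

theorem commute_gen {u v : V} (h : G.Adj u v) : Commute (gen G u) (gen G v) := by
  rw [← commutatorElement_eq_one_iff_commute]
  exact PresentedGroup.one_of_mem ⟨u, v, h, rfl⟩

variable {H : Type*} [Group H]

def lift (f : V → H) (hf : ∀ ⦃u v⦄, G.Adj u v → Commute (f u) (f v)) : RAAG G →* H :=
  PresentedGroup.toGroup (f := f) <| by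
    rintro _ ⟨u, v, huv, rfl⟩
    simpa [← commutatorElement_def, commutatorElement_eq_one_iff_commute] using hf huv

@[simp]
theorem lift_gen (f : V → H) (hf : ∀ ⦃u v⦄, G.Adj u v → Commute (f u) (f v)) (v : V) :
    lift f hf (gen G v) = f v :=
  PresentedGroup.toGroup.of _

theorem hom_ext {φ χ : RAAG G →* H} (h : ∀ v, φ (gen G v) = χ (gen G v)) : φ = χ :=
  PresentedGroup.ext h

open Classical in
noncomputable def retraction (G : SimpleGraph V) (S : Set V) : RAAG G →* RAAG (G.induce S) :=
  lift (fun v => if h : v ∈ S then gen (G.induce S) ⟨v, h⟩ else 1) fun u v huv => by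
    by_cases hu : u ∈ S <;> by_cases hv : v ∈ S <;> simp only [hu, hv, dite_true, dite_false]
    · exact commute_gen (G := G.induce S) huv
    all_goals simp

theorem retraction_gen_of_mem {S : Set V} (s : S) :
    retraction G S (gen G s) = gen (G.induce S) s := by
  simp [retraction]

end RAAG

theorem stmt_4 {V : Type*} (G : SimpleGraph V) (S : Set V)
    (ψ : RAAG (G.induce S) →* RAAG G)
    (hψ : ∀ s : S, ψ (RAAG.gen (G.induce S) s) = RAAG.gen G (s : V)) :
    Function.Injective ψ := by
  have hretract : (RAAG.retraction G S).comp ψ = MonoidHom.id _ :=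
    RAAG.hom_ext fun s => by simp [hψ, RAAG.retraction_gen_of_mem]
  exact Function.LeftInverse.injective (DFunLike.congr_fun hretract)
end

section
/- For every N ∈ ℕ, the following identity holds in A_L: (a · xᴺ · e · x⁻ᴺ)ᴺ = ū₂⁻ᴺ · (ū₂⁻¹ū₁ · ū₃⁻¹ū₄)ᴺ · ū₂ᴺ. -/
/-- The path graph `L` on the four vertices `u₁ = 0, u₂ = 1, u₃ = 2, u₄ = 3`,
with edges `{u₁,u₂}, {u₂,u₃}, {u₃,u₄}`. -/
abbrev L : SimpleGraph (Fin 4) := SimpleGraph.pathGraph 4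

/-- The right-angled Artin group
`A_L = ⟨u₁,u₂,u₃,u₄ ∣ [u₁,u₂] = [u₂,u₃] = [u₃,u₄] = 1⟩`. -/
abbrev A_L : Type _ := RAAG L

/-- `a = ū₂⁻¹ū₁`. -/
def elt_a : A_L := (RAAG.gen L 1)⁻¹ * RAAG.gen L 0

/-- `x = ū₂⁻¹ū₃`. -/
def elt_x : A_L := (RAAG.gen L 1)⁻¹ * RAAG.gen L 2

/-- `e = ū₃⁻¹ū₄`. -/
def elt_e : A_L := (RAAG.gen L 2)⁻¹ * RAAG.gen L 3

/-- The homomorphism `φ : FreeGroup (Fin 3) →* A_L` with `φ g₀ = a`, `φ g₁ = x`,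
`φ g₂ = e`. -/
def phi : FreeGroup (Fin 3) →* A_L := FreeGroup.lift ![elt_a, elt_x, elt_e]

/-!
Since `ū₂` and `ū₃` commute, `xᴺ = ū₂⁻ᴺ ū₃ᴺ`. Conjugation by `ū₃ᴺ` fixes `e = ū₃⁻¹ū₄` because `ū₃`
commutes with `ū₄`, so `xᴺ e x⁻ᴺ = ū₂⁻ᴺ e ū₂ᴺ`; and `ū₂⁻ᴺ` commutes with `a = ū₂⁻¹ū₁` because `ū₂`
commutes with `ū₁`. Hence `a xᴺ e x⁻ᴺ = ū₂⁻ᴺ (a e) ū₂ᴺ`, whose `N`-th power is `ū₂⁻ᴺ (a e)ᴺ ū₂ᴺ`.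
-/

theorem RAAG.commute_gen_of_adj {V : Type*} {G : SimpleGraph V} {u v : V} (h : G.Adj u v) :
    Commute (RAAG.gen G u) (RAAG.gen G v) := by
  rw [← commutatorElement_eq_one_iff_commute, commutatorElement_def]
  simpa only [RAAG.gen, PresentedGroup.of, map_mul, map_inv] using
    PresentedGroup.one_of_mem (rels := raagRels G) ⟨u, v, h, rfl⟩

section PathConjugation

variable {G : Type*} [Group G] {g₁ g₂ g₃ g₄ : G}

theorem Commute.inv_mul_pow (h : Commute g₁ g₂) (n : ℕ) :
    (g₁⁻¹ * g₂) ^ n = (g₁ ^ n)⁻¹ * g₂ ^ n := by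
  rw [h.inv_left.mul_pow, inv_pow]

theorem path_conj_eq (h₁₂ : Commute g₁ g₂) (h₂₃ : Commute g₂ g₃) (h₃₄ : Commute g₃ g₄)
    (n : ℕ) :
    g₂⁻¹ * g₁ * (g₂⁻¹ * g₃) ^ n * (g₃⁻¹ * g₄) * ((g₂⁻¹ * g₃) ^ n)⁻¹
      = (g₂ ^ n)⁻¹ * (g₂⁻¹ * g₁ * (g₃⁻¹ * g₄)) * g₂ ^ n := by
  have hfix : g₃ ^ n * (g₃⁻¹ * g₄) * (g₃ ^ n)⁻¹ = g₃⁻¹ * g₄ :=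
    (((Commute.refl g₃).inv_right.mul_right h₃₄).pow_left n).mul_inv_cancel
  have hswap : Commute (g₂⁻¹ * g₁) (g₂ ^ n)⁻¹ :=
    (((Commute.refl g₂).inv_left.mul_left h₁₂).pow_right n).inv_right
  calc g₂⁻¹ * g₁ * (g₂⁻¹ * g₃) ^ n * (g₃⁻¹ * g₄) * ((g₂⁻¹ * g₃) ^ n)⁻¹
      = g₂⁻¹ * g₁ * (g₂ ^ n)⁻¹ * (g₃ ^ n * (g₃⁻¹ * g₄) * (g₃ ^ n)⁻¹) * g₂ ^ n := by
        rw [h₂₃.inv_mul_pow]; group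
    _ = (g₂ ^ n)⁻¹ * (g₂⁻¹ * g₁) * (g₃⁻¹ * g₄) * g₂ ^ n := by
        rw [hfix, hswap.eq]
    _ = (g₂ ^ n)⁻¹ * (g₂⁻¹ * g₁ * (g₃⁻¹ * g₄)) * g₂ ^ n := by
        simp only [mul_assoc]

theorem path_conj_pow_eq (h₁₂ : Commute g₁ g₂) (h₂₃ : Commute g₂ g₃) (h₃₄ : Commute g₃ g₄)
    (n m : ℕ) :
    (g₂⁻¹ * g₁ * (g₂⁻¹ * g₃) ^ n * (g₃⁻¹ * g₄) * ((g₂⁻¹ * g₃) ^ n)⁻¹) ^ m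
      = (g₂ ^ n)⁻¹ * (g₂⁻¹ * g₁ * (g₃⁻¹ * g₄)) ^ m * g₂ ^ n := by
  rw [path_conj_eq h₁₂ h₂₃ h₃₄]
  simpa only [inv_inv] using conj_pow (a := (g₂ ^ n)⁻¹) (b := g₂⁻¹ * g₁ * (g₃⁻¹ * g₄)) (i := m)

end PathConjugation

theorem stmt_6 (N : ℕ) :
    (elt_a * elt_x ^ N * elt_e * (elt_x ^ N)⁻¹) ^ N
      = (RAAG.gen L 1 ^ N)⁻¹
          * (((RAAG.gen L 1)⁻¹ * RAAG.gen L 0 * ((RAAG.gen L 2)⁻¹ * RAAG.gen L 3)) ^ N)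
          * RAAG.gen L 1 ^ N := by
  have hL : ∀ i : Fin 3, L.Adj i.castSucc i.succ := fun _ =>
    SimpleGraph.pathGraph_adj.2 (Or.inl rfl)
  exact path_conj_pow_eq (RAAG.commute_gen_of_adj (hL 0)) (RAAG.commute_gen_of_adj (hL 1))
    (RAAG.commute_gen_of_adj (hL 2)) N N
end

section
/- For every N ∈ ℕ, the element φ(w_N) of A_L can be written as a product of 6N elements of S ∪ S⁻¹, where S = {ū₁, ū₂, ū₃, ū₄}; that is, there exists a list of length 6N with entries in S ∪ S⁻¹ whose product is φ(w_N). In particular the word length of φ(w_N) with respect to S is at most 6N. -/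
/-- The standard generating set `S = {ū₁, ū₂, ū₃, ū₄}` of `A_L`. -/
def genSet : Set A_L := {RAAG.gen L 0, RAAG.gen L 1, RAAG.gen L 2, RAAG.gen L 3}

theorem RAAG.commute_gen_s8 {V : Type*} (G : SimpleGraph V) {i j : V} (h : G.Adj i j) :
    Commute (RAAG.gen G i) (RAAG.gen G j) := by
  have hrel : RAAG.gen G i * RAAG.gen G j * (RAAG.gen G i)⁻¹ * (RAAG.gen G j)⁻¹ = 1 :=
    PresentedGroup.one_of_mem ⟨i, j, h, rfl⟩
  exact commutatorElement_eq_one_iff_commute.mp (by simpa [commutatorElement_def] using hrel)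

theorem pow_eq_conj_pow_of_commute {G : Type*} [Group G] {a b c d : G}
    (hab : Commute a b) (hbc : Commute b c) (hcd : Commute c d) (n m : ℕ) :
    (b⁻¹ * a * (b⁻¹ * c) ^ n * (c⁻¹ * d) * ((b⁻¹ * c) ^ n)⁻¹) ^ m =
      (b ^ n)⁻¹ * (b⁻¹ * a * d * c⁻¹) ^ m * b ^ n := by
  have hpow : (b⁻¹ * c) ^ n = (b ^ n)⁻¹ * c ^ n := by
    rw [hbc.inv_left.mul_pow, inv_pow]
  have ha : a * (b ^ n)⁻¹ = (b ^ n)⁻¹ * a := (hab.pow_right n).inv_right.eq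
  have hd : d * (c ^ n)⁻¹ = (c ^ n)⁻¹ * d := (hcd.symm.pow_right n).inv_right.eq
  have hcd' : c⁻¹ * d = d * c⁻¹ := hcd.inv_left.eq
  have hfactor : b⁻¹ * a * (b⁻¹ * c) ^ n * (c⁻¹ * d) * ((b⁻¹ * c) ^ n)⁻¹ =
      (b ^ n)⁻¹ * (b⁻¹ * a * d * c⁻¹) * ((b ^ n)⁻¹)⁻¹ :=
    calc b⁻¹ * a * (b⁻¹ * c) ^ n * (c⁻¹ * d) * ((b⁻¹ * c) ^ n)⁻¹
        = b⁻¹ * (a * (b ^ n)⁻¹) * (c ^ n * c⁻¹ * (d * (c ^ n)⁻¹)) * b ^ n := by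
          rw [hpow]; group
      _ = b⁻¹ * ((b ^ n)⁻¹ * a) * (c ^ n * c⁻¹ * ((c ^ n)⁻¹ * d)) * b ^ n := by rw [ha, hd]
      _ = (b ^ n)⁻¹ * (b⁻¹ * a * (c⁻¹ * d)) * ((b ^ n)⁻¹)⁻¹ := by group
      _ = (b ^ n)⁻¹ * (b⁻¹ * a * d * c⁻¹) * ((b ^ n)⁻¹)⁻¹ := by rw [hcd', mul_assoc _ d]
  rw [hfactor, conj_pow, inv_inv]

theorem RAAG.gen_mem_genSet (i : Fin 4) : RAAG.gen L i ∈ genSet := by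
  fin_cases i <;> simp [genSet]

def shortWord (N : ℕ) : List A_L :=
  List.replicate N (RAAG.gen L 1)⁻¹ ++
    (List.replicate N [(RAAG.gen L 1)⁻¹, RAAG.gen L 0, RAAG.gen L 3, (RAAG.gen L 2)⁻¹]).flatten ++
    List.replicate N (RAAG.gen L 1)

theorem length_shortWord (N : ℕ) : (shortWord N).length = 6 * N := by
  simp only [shortWord, List.length_append, List.length_replicate, List.length_flatten,
    List.map_replicate, List.length_cons, List.length_nil, List.sum_replicate, smul_eq_mul]
  ring

theorem mem_genSet_of_mem_shortWord {N : ℕ} {g : A_L} (hg : g ∈ shortWord N) :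
    g ∈ genSet ∪ genSet⁻¹ := by
  have hgen (i : Fin 4) : RAAG.gen L i ∈ genSet ∪ genSet⁻¹ := .inl (RAAG.gen_mem_genSet i)
  have hinv (i : Fin 4) : (RAAG.gen L i)⁻¹ ∈ genSet ∪ genSet⁻¹ :=
    .inr (Set.inv_mem_inv.mpr (RAAG.gen_mem_genSet i))
  simp only [shortWord, List.mem_append, List.mem_flatten, List.mem_replicate] at hg
  rcases hg with (⟨-, rfl⟩ | ⟨_, ⟨-, rfl⟩, hg⟩) | ⟨-, rfl⟩
  · exact hinv 1
  · simp only [List.mem_cons, List.not_mem_nil, or_false] at hg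
    rcases hg with rfl | rfl | rfl | rfl
    exacts [hinv 1, hgen 0, hgen 3, hinv 2]
  · exact hgen 1

theorem prod_shortWord (N : ℕ) :
    (shortWord N).prod = (RAAG.gen L 1 ^ N)⁻¹ *
      ((RAAG.gen L 1)⁻¹ * RAAG.gen L 0 * RAAG.gen L 3 * (RAAG.gen L 2)⁻¹) ^ N *
      RAAG.gen L 1 ^ N := by
  simp [shortWord, List.prod_flatten, mul_assoc]

theorem stmt_8 (N : ℕ) :
    ∃ l : List A_L, l.length = 6 * N ∧ (∀ g ∈ l, g ∈ genSet ∪ genSet⁻¹) ∧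
      l.prod = phi ((FreeGroup.of (0 : Fin 3) * FreeGroup.of (1 : Fin 3) ^ N
          * FreeGroup.of (2 : Fin 3) * (FreeGroup.of (1 : Fin 3) ^ N)⁻¹) ^ N) := by
  have hadj (i : Fin 3) : L.Adj i.castSucc i.succ := SimpleGraph.pathGraph_adj.mpr (.inl rfl)
  refine ⟨shortWord N, length_shortWord N, fun g => mem_genSet_of_mem_shortWord, ?_⟩
  have himage := pow_eq_conj_pow_of_commute (RAAG.commute_gen_s8 L (hadj 0))
    (RAAG.commute_gen_s8 L (hadj 1)) (RAAG.commute_gen_s8 L (hadj 2)) N N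
  simp only [map_pow, map_mul, map_inv, phi, FreeGroup.lift_apply_of, elt_a, elt_x, elt_e]
  rw [prod_shortWord]
  exact himage.symm
end

section
/- Let G be a simple graph with no 4-cliques (G.CliqueFree 4). Let u, v, u', v' be vertices with u adjacent to v and u' adjacent to v', such that the edges {u,v} and {u',v'} are distinct as unordered pairs and the vertex set {u, v, u', v'} is not a clique in G (equivalently, the two edges do not lie in a common simplex of the flag complex of G). Then the group homomorphism FreeGroup Bool → A_G sending the generator false to ū⁻¹·v̄ and the generator true to ū'⁻¹·v̄' is injective; that is, ū⁻¹·v̄ and ū'⁻¹·v̄' generate a free subgroup of rank 2 of A_G. -/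
theorem stmt_13 {V : Type*} (G : SimpleGraph V) (hcf : G.CliqueFree 4)
    (u v u' v' : V) (huv : G.Adj u v) (huv' : G.Adj u' v')
    (hne : (Sym2.mk (u, v)) ≠ (Sym2.mk (u', v')))
    (hnc : ¬ G.IsClique ({u, v, u', v'} : Set V))
    (ψ : FreeGroup Bool →* RAAG G)
    (hfalse : ψ (FreeGroup.of false) = (RAAG.gen G u)⁻¹ * RAAG.gen G v)
    (htrue : ψ (FreeGroup.of true) = (RAAG.gen G u')⁻¹ * RAAG.gen G v') :
    Function.Injective ψ := by
  classical
  -- Find a non-adjacent pair p ∈ {u,v}, q ∈ {u',v'}, p ≠ q.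
  obtain ⟨p, hp, q, hq, hpqne, hpq⟩ :
      ∃ p ∈ ({u, v} : Set V), ∃ q ∈ ({u', v'} : Set V), p ≠ q ∧ ¬ G.Adj p q := by
    by_contra h
    push_neg at h
    apply hnc
    intro x hx y hy hxy
    simp only [Set.mem_insert_iff, Set.mem_singleton_iff] at hx hy
    have h1 : ∀ a b : V, (a = u ∨ a = v) → (b = u' ∨ b = v') → a ≠ b → G.Adj a b := by
      intro a b ha hb hab
      exact h a (by simpa using ha) b (by simpa using hb) hab
    rcases hx with hx | hx | hx | hx <;> rcases hy with hy | hy | hy | hy <;> subst hx <;> subst hy <;>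
      first
        | exact absurd rfl hxy
        | exact huv | exact huv.symm | exact huv' | exact huv'.symm
        | exact h1 _ _ (Or.inl rfl) (Or.inl rfl) hxy
        | exact h1 _ _ (Or.inl rfl) (Or.inr rfl) hxy
        | exact h1 _ _ (Or.inr rfl) (Or.inl rfl) hxy
        | exact h1 _ _ (Or.inr rfl) (Or.inr rfl) hxy
        | exact (h1 _ _ (Or.inl rfl) (Or.inl rfl) hxy.symm).symm
        | exact (h1 _ _ (Or.inl rfl) (Or.inr rfl) hxy.symm).symm
        | exact (h1 _ _ (Or.inr rfl) (Or.inl rfl) hxy.symm).symm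
        | exact (h1 _ _ (Or.inr rfl) (Or.inr rfl) hxy.symm).symm
  -- Define the assignment of generators.
  set f : V → FreeGroup Bool := fun w =>
    if w = p then FreeGroup.of false else if w = q then FreeGroup.of true else 1 with hf
  have hfp : f p = FreeGroup.of false := by simp [hf]
  have hfq : f q = FreeGroup.of true := by simp [hf, (Ne.symm hpqne)]
  have hfo : ∀ w, w ≠ p → w ≠ q → f w = 1 := by intro w h1 h2; simp [hf, h1, h2]
  -- Relations are satisfied.
  have hrel : ∀ r ∈ raagRels G, FreeGroup.lift f r = 1 := by
    rintro r ⟨a, b, hab, rfl⟩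
    have hcomm : Commute (f a) (f b) := by
      by_cases ha1 : a = p
      · rw [ha1] at hab ⊢
        have hbp : b ≠ p := fun hh => by subst hh; exact G.irrefl hab
        by_cases hbq : b = q
        · subst hbq; exact absurd hab hpq
        · rw [hfo b hbp hbq]; exact Commute.one_right _
      · by_cases ha2 : a = q
        · rw [ha2] at hab ⊢
          have hbq : b ≠ q := fun hh => by subst hh; exact G.irrefl hab
          by_cases hbp : b = p
          · subst hbp; exact absurd hab.symm hpq
          · rw [hfo b hbp hbq]; exact Commute.one_right _
        · rw [hfo a ha1 ha2]; exact Commute.one_left _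
    simp only [map_mul, map_inv, FreeGroup.lift_apply_of]
    rw [hcomm.eq]
    group
  -- The retraction.
  let χ : RAAG G →* FreeGroup Bool := PresentedGroup.toGroup hrel
  have hχgen : ∀ w, χ (RAAG.gen G w) = f w := fun w => PresentedGroup.toGroup.of hrel
  set θ : FreeGroup Bool →* FreeGroup Bool := χ.comp ψ with hθ
  have hθf : θ (FreeGroup.of false) = (f u)⁻¹ * f v := by
    simp [hθ, hfalse, hχgen]
  have hθt : θ (FreeGroup.of true) = (f u')⁻¹ * f v' := by
    simp [hθ, htrue, hχgen]
  have key : ∀ (b : Bool) (x y : V), G.Adj x y → p = x ∨ p = y →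
      (∀ w, w ≠ p → w ≠ q → f w = 1) → θ (FreeGroup.of b) = (f x)⁻¹ * f y →
      f p = FreeGroup.of b → θ (θ (FreeGroup.of b)) = FreeGroup.of b := by
    intro b x y hxy hcase hfo' hθb hfpb
    rcases hcase with rfl | rfl
    · have hyp : y ≠ p := fun hh => by subst hh; exact G.irrefl hxy
      have hyq : y ≠ q := fun hh => by subst hh; exact hpq hxy
      rw [hθb, hfpb, hfo' y hyp hyq]
      simp only [mul_one, map_inv, hθb, hfpb, hfo' y hyp hyq, mul_one]
      simp
    · have hxp : x ≠ p := fun hh => by subst hh; exact G.irrefl hxy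
      have hxq : x ≠ q := fun hh => by subst hh; exact hpq hxy.symm
      rw [hθb, hfo' x hxp hxq, hfpb]
      simp only [inv_one, one_mul, hθb, hfo' x hxp hxq, hfpb, inv_one, one_mul]
  -- p is in {u,v}: gives θθ(of false) = of false; q similarly for true.
  have keyf : θ (θ (FreeGroup.of false)) = FreeGroup.of false := by
    rcases hp with rfl | hp
    · exact key false p v huv (Or.inl rfl) hfo hθf hfp
    · simp only [Set.mem_singleton_iff] at hp
      subst hp
      exact key false u p huv (Or.inr rfl) hfo hθf hfp
  have keyt : θ (θ (FreeGroup.of true)) = FreeGroup.of true := by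
    -- here the special vertex is q, with f q = of true: symmetric argument
    rcases hq with rfl | hq
    · have hyp : v' ≠ q := fun hh => by subst hh; exact G.irrefl huv'
      have hyq : v' ≠ p := fun hh => by subst hh; exact hpq huv'.symm
      rw [hθt, hfq, hfo v' hyq hyp]
      simp only [mul_one, map_inv, hθt, hfq, hfo v' hyq hyp, mul_one]
      simp
    · simp only [Set.mem_singleton_iff] at hq
      subst hq
      have hxp : u' ≠ q := fun hh => by subst hh; exact G.irrefl huv'
      have hxq : u' ≠ p := fun hh => by subst hh; exact hpq huv'
      rw [hθt, hfo u' hxq hxp, hfq]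
      simp only [inv_one, one_mul, hθt, hfo u' hxq hxp, hfq, inv_one, one_mul]
  have hid : θ.comp θ = MonoidHom.id _ := by
    apply FreeGroup.ext_hom
    intro b
    cases b
    · simpa using keyf
    · simpa using keyt
  have hθinj : Function.Injective θ := by
    intro x y hxy
    have := congrArg (fun g => θ g) hxy
    calc x = (θ.comp θ) x := by rw [hid]; rfl
    _ = (θ.comp θ) y := by simpa using this
    _ = y := by rw [hid]; rfl
  intro x y hxy
  apply hθinj
  apply hθinj
  simp [hθ, MonoidHom.comp_apply, hxy]
end
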